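/- Existence of the radius of weak stabilization: let P ⊂ R^d be a point set without accumulation points and Q a finite set centered in B(z,L). For each pair 0 ≤ r ≤ s < ∞ there exists a finite R such that for all a ≥ R and all 0 ≤ q ≤ d−1, both dim Z_q(K'_{r,a}) − dim Z_q(K_{r,a}) and dim(Z_q(K'_{r,a}) ∩ B_q(K'_{s,a})) − dim(Z_q(K_{r,a}) ∩ B_q(K_{s,a})) are constant in a, where K_{u,a} = K_u(P ∩ B(z,a)) and K'_{u,a} = K_u((P ∪ Q) ∩ B(z,a)) for the Čech or Rips filtration. -/

import Mathlib

set_option autoImplicit false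

open Submodule

/-- An abstract simplicial complex on vertex type `V`: a collection of finite nonempty
subsets closed under taking nonempty subsets. -/
def IsComplex {V : Type*} (K : Set (Finset V)) : Prop :=
  ∀ σ ∈ K, σ.Nonempty ∧ ∀ τ : Finset V, τ ⊆ σ → τ.Nonempty → τ ∈ K

/-- The space of all `F₂`-chains on the vertex type `V`: the free `F₂`-vector space on
all finite subsets of `V`. -/
abbrev Chain (V : Type*) := Finset V →₀ ZMod 2

/-- The boundary map with `F₂`-coefficients, sending a simplex to the sum of its
codimension-one faces. -/
noncomputable def bdry (V : Type*) : Chain V →ₗ[ZMod 2] Chain V := by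
  classical
  exact Finsupp.lsum (ZMod 2) fun σ =>
    LinearMap.toSpanSingleton (ZMod 2) (Chain V) (∑ x ∈ σ, Finsupp.single (σ.erase x) 1)

/-- `C_q(K)`: the chain group of a complex `K`, the `F₂`-span of its `q`-simplices,
viewed as a subspace of the free `F₂`-vector space on all finite vertex sets. -/
noncomputable def chainGroup {V : Type*} (K : Set (Finset V)) (q : ℕ) :
    Submodule (ZMod 2) (Chain V) :=
  Submodule.span (ZMod 2)
    {c | ∃ σ ∈ K, σ.card = q + 1 ∧ c = Finsupp.single σ (1 : ZMod 2)}

/-- `Z_q(K)`: the cycle group of a complex `K`. -/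
noncomputable def cycleGroup {V : Type*} (K : Set (Finset V)) (q : ℕ) :
    Submodule (ZMod 2) (Chain V) :=
  chainGroup K q ⊓ LinearMap.ker (bdry V)

/-- `B_q(K)`: the boundary group of a complex `K`. -/
noncomputable def boundaryGroup {V : Type*} (K : Set (Finset V)) (q : ℕ) :
    Submodule (ZMod 2) (Chain V) :=
  Submodule.map (bdry V) (chainGroup K (q + 1))

/-- The `(r,s)`-persistent Betti number of a filtration
`Kf`: `dim (Z_q(K_r) / (Z_q(K_r) ∩ B_q(K_s)))`. -/
noncomputable def pBetti {V : Type*} (Kf : ℝ → Set (Finset V)) (q : ℕ) (r s : ℝ) : ℕ :=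
  Module.finrank (ZMod 2)
    (↥(cycleGroup (Kf r) q) ⧸
      (Submodule.comap (cycleGroup (Kf r) q).subtype (boundaryGroup (Kf s) q) :
        Submodule (ZMod 2) ↥(cycleGroup (Kf r) q)))

/-- Points of `ℝ^d`. -/
abbrev Pt (d : ℕ) := EuclideanSpace ℝ (Fin d)

/-- The Čech complex at scale `r` of a set `S ⊆ ℝ^d`: all finite nonempty `σ ⊆ S` whose
closed `r`-balls have a common point. -/
def cechCx (d : ℕ) (r : ℝ) (S : Set (Pt d)) : Set (Finset (Pt d)) :=
  {σ | ↑σ ⊆ S ∧ σ.Nonempty ∧ (⋂ x ∈ (σ : Set (Pt d)), Metric.closedBall x r).Nonempty}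

/-- The Vietoris–Rips complex at scale `r` of a set `S ⊆ ℝ^d`: all finite nonempty
`σ ⊆ S` of diameter at most `r`. -/
def ripsCx (d : ℕ) (r : ℝ) (S : Set (Pt d)) : Set (Finset (Pt d)) :=
  {σ | ↑σ ⊆ S ∧ σ.Nonempty ∧ Metric.diam (σ : Set (Pt d)) ≤ r}

/-- The `(r,s)`-persistent Betti number of the filtration `Kx` (Čech or Rips) built on the
point set `S ⊆ ℝ^d`. -/
noncomputable def pBettiPts {d : ℕ} (Kx : ℝ → Set (Pt d) → Set (Finset (Pt d)))
    (q : ℕ) (r s : ℝ) (S : Set (Pt d)) : ℕ :=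
  pBetti (fun t => Kx t S) q r s

/-!
Since `P` has no accumulation points, it meets every closed ball in finitely many points.
A simplex whose vertices are pairwise at distance at most `D` and which has a vertex in
`Q ⊆ B(z, L)` lies in `B(z, L + D)`. Hence for `a ≥ L + D` the complex on `(P ∪ Q) ∩ B(z, a)`
is the union of the complex on `P ∩ B(z, a)` and one fixed finite complex, so that
`B'_a = H ⊔ B_a` for a fixed `H`. The cycles `Z'_a` taken modulo chains supported on `P` form a
monotone family inside a fixed finite-dimensional space, so they stabilise, which gives
`Z'_a = G ⊔ Z_a` for a fixed finite-dimensional `G`. For a monotone family `X_a` and a fixed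
finite-dimensional `F`, `dim (F ⊔ X_a) - dim X_a = dim F - dim (F ⊓ X_a)` is eventually
constant, and by `dim (U ⊔ V) + dim (U ⊓ V) = dim U + dim V` both differences in the theorem
are sums of such terms.
-/

open Filter Module Metric

theorem Filter.exists_forall_eq_of_eventuallyConst_atTop {ι α β : Type*} [SemilatticeSup α]
    [Nonempty α] {f : ι → α → β} (hf : ∀ i, EventuallyConst (f i) atTop) {I : Set ι}
    (hI : I.Finite) : ∃ R, ∀ i ∈ I, ∀ a₁ a₂, R ≤ a₁ → R ≤ a₂ → f i a₁ = f i a₂ := by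
  choose R hR using fun i => eventuallyConst_atTop.1 (hf i)
  obtain ⟨R₀, hR₀⟩ := (hI.image R).bddAbove
  refine ⟨R₀, fun i hi a₁ a₂ h₁ h₂ => ?_⟩
  have hRi : R i ≤ R₀ := hR₀ (Set.mem_image_of_mem R hi)
  exact (hR i a₁ (hRi.trans h₁)).trans (hR i a₂ (hRi.trans h₂)).symm

namespace Submodule

variable {K M ι : Type*} [DivisionRing K] [AddCommGroup M] [Module K M]
  [SemilatticeSup ι] [Nonempty ι]

theorem eventuallyConst_atTop_of_monotone_of_le {F : Submodule K M} [FiniteDimensional K F]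
    {X : ι → Submodule K M} (hX : Monotone X) (hXF : ∀ i, X i ≤ F) :
    EventuallyConst X atTop := by
  have : ∀ i, FiniteDimensional K (X i) := fun i => finiteDimensional_of_le (hXF i)
  have hbdd : BddAbove (Set.range fun i => finrank K (X i)) :=
    ⟨finrank K F, Set.forall_mem_range.2 fun i => finrank_mono (hXF i)⟩
  obtain ⟨i₀, hi₀⟩ := Nat.sSup_mem (Set.range_nonempty _) hbdd
  refine eventuallyConst_atTop.2 ⟨i₀, fun i hi => (eq_of_le_of_finrank_le (hX hi) ?_).symm⟩
  exact (le_csSup hbdd (Set.mem_range_self i)).trans_eq hi₀.symm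

theorem eventuallyConst_finrank_sup_sub_finrank (F : Submodule K M) [FiniteDimensional K F]
    {X : ι → Submodule K M} (hX : Monotone X) [∀ i, FiniteDimensional K (X i)] :
    EventuallyConst (fun i => (finrank K ↥(F ⊔ X i) : ℤ) - finrank K ↥(X i)) atTop := by
  have hinf : EventuallyConst (fun i => F ⊓ X i) atTop :=
    eventuallyConst_atTop_of_monotone_of_le (fun i j h => inf_le_inf_left F (hX h))
      fun i => inf_le_left
  refine (hinf.comp fun W => (finrank K F : ℤ) - finrank K W).congr
    (Eventually.of_forall fun i => ?_)
  have := finrank_sup_add_finrank_inf_eq F (X i)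
  simp only [Function.comp_apply]
  omega

/-- The images of the `Y i` modulo `N` lie in the finite-dimensional `map N.mkQ F`, so they
stabilise. -/
theorem exists_eventually_eq_sup_inf {N F : Submodule K M} [FiniteDimensional K F]
    {Y : ι → Submodule K M} (hY : Monotone Y) (hYF : ∀ i, Y i ≤ N ⊔ F) :
    ∃ i₀, ∀ᶠ i in atTop, Y i = Y i₀ ⊔ Y i ⊓ N := by
  have hmap : ∀ i, map N.mkQ (Y i) ≤ map N.mkQ F := fun i => by
    simpa only [map_sup, mkQ_map_self, bot_sup_eq] using map_mono (f := N.mkQ) (hYF i)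
  obtain ⟨i₀, hi₀⟩ := eventuallyConst_atTop.1
    (eventuallyConst_atTop_of_monotone_of_le (fun i j h => map_mono (hY h)) hmap)
  refine ⟨i₀, eventually_atTop.2 ⟨i₀, fun i hi => ?_⟩⟩
  have hsup : N ⊔ Y i = N ⊔ Y i₀ := by rw [← comap_map_mkQ, ← comap_map_mkQ, hi₀ i hi]
  calc Y i = (N ⊔ Y i) ⊓ Y i := (inf_eq_right.2 le_sup_right).symm
    _ = (Y i₀ ⊔ N) ⊓ Y i := by rw [hsup, sup_comm]
    _ = Y i₀ ⊔ Y i ⊓ N := by rw [sup_inf_assoc_of_le _ (hY hi), inf_comm]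

theorem eventuallyConst_finrank_inf_sub_finrank_inf {G H : Submodule K M}
    [FiniteDimensional K G] [FiniteDimensional K H] {Z B Z' B' : ι → Submodule K M}
    (hZ : Monotone Z) (hB : Monotone B) [∀ i, FiniteDimensional K (Z i)]
    [∀ i, FiniteDimensional K (B i)] (hZ' : ∀ᶠ i in atTop, Z' i = G ⊔ Z i)
    (hB' : ∀ᶠ i in atTop, B' i = H ⊔ B i) :
    EventuallyConst (fun i => (finrank K ↥(Z' i ⊓ B' i) : ℤ) - finrank K ↥(Z i ⊓ B i))
      atTop := by
  have hZB : Monotone fun i => Z i ⊔ B i := fun i j h => sup_le_sup (hZ h) (hB h)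
  refine (((eventuallyConst_finrank_sup_sub_finrank G hZ).add
    (eventuallyConst_finrank_sup_sub_finrank H hB)).comp₂ (· - ·)
    (eventuallyConst_finrank_sup_sub_finrank (G ⊔ H) hZB)).congr ?_
  filter_upwards [hZ', hB'] with i hZi hBi
  have hU := finrank_sup_add_finrank_inf_eq (G ⊔ Z i) (H ⊔ B i)
  have hL := finrank_sup_add_finrank_inf_eq (Z i) (B i)
  rw [sup_sup_sup_comm] at hU
  rw [Pi.add_apply, hZi, hBi]
  omega

end Submodule

section Chains

variable {V : Type*}

def inducedCx (K : Set (Finset V)) (S : Set V) : Set (Finset V) :=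
  {σ | σ ∈ K ∧ ↑σ ⊆ S}

theorem inducedCx_mono (K : Set (Finset V)) {S T : Set V} (h : S ⊆ T) :
    inducedCx K S ⊆ inducedCx K T :=
  fun _ hσ => ⟨hσ.1, hσ.2.trans h⟩

def chainsOn (T : Set V) : Submodule (ZMod 2) (Chain V) :=
  Finsupp.supported (ZMod 2) (ZMod 2) {σ : Finset V | (σ : Set V) ⊆ T}

theorem finiteDimensional_chainsOn {T : Set V} (hT : T.Finite) :
    FiniteDimensional (ZMod 2) (chainsOn T) := by
  have hfin : {σ : Finset V | (σ : Set V) ⊆ T}.Finite :=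
    hT.finite_subsets.preimage Finset.coe_injective.injOn
  rw [chainsOn, Finsupp.supported_eq_span_single]
  exact FiniteDimensional.span_of_finite _ (hfin.image _)

theorem chainGroup_eq_supported (K : Set (Finset V)) (q : ℕ) :
    chainGroup K q =
      Finsupp.supported (ZMod 2) (ZMod 2) {σ : Finset V | σ ∈ K ∧ σ.card = q + 1} := by
  rw [Finsupp.supported_eq_span_single, chainGroup]
  congr 1
  ext c
  constructor
  · rintro ⟨σ, hσ, hcard, rfl⟩
    exact ⟨σ, ⟨hσ, hcard⟩, rfl⟩
  · rintro ⟨σ, ⟨hσ, hcard⟩, rfl⟩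
    exact ⟨σ, hσ, hcard, rfl⟩

theorem chainGroup_mono {K K' : Set (Finset V)} (h : K ⊆ K') (q : ℕ) :
    chainGroup K q ≤ chainGroup K' q := by
  rw [chainGroup_eq_supported, chainGroup_eq_supported]
  exact Finsupp.supported_mono fun σ hσ => ⟨h hσ.1, hσ.2⟩

theorem cycleGroup_mono {K K' : Set (Finset V)} (h : K ⊆ K') (q : ℕ) :
    cycleGroup K q ≤ cycleGroup K' q :=
  inf_le_inf_right _ (chainGroup_mono h q)

theorem boundaryGroup_mono {K K' : Set (Finset V)} (h : K ⊆ K') (q : ℕ) :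
    boundaryGroup K q ≤ boundaryGroup K' q :=
  map_mono (chainGroup_mono h (q + 1))

theorem chainGroup_union (K K' : Set (Finset V)) (q : ℕ) :
    chainGroup (K ∪ K') q = chainGroup K q ⊔ chainGroup K' q := by
  simp only [chainGroup_eq_supported, ← Finsupp.supported_union]
  congr 1
  ext σ
  simp only [Set.mem_ofPred_eq, Set.mem_union]
  tauto

theorem chainGroup_inducedCx_le_chainsOn (K : Set (Finset V)) {S T : Set V} (h : S ⊆ T)
    (q : ℕ) : chainGroup (inducedCx K S) q ≤ chainsOn T := by
  rw [chainGroup_eq_supported, chainsOn]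
  exact Finsupp.supported_mono fun σ hσ => hσ.1.2.trans h

theorem chainGroup_inducedCx_inf_chainsOn (K : Set (Finset V)) (S T : Set V) (q : ℕ) :
    chainGroup (inducedCx K S) q ⊓ chainsOn T = chainGroup (inducedCx K (S ∩ T)) q := by
  rw [chainGroup_eq_supported, chainGroup_eq_supported, chainsOn, ← Finsupp.supported_inter]
  congr 1
  ext σ
  simp only [inducedCx, Set.mem_inter_iff, Set.mem_ofPred_eq, Set.subset_inter_iff]
  tauto

theorem cycleGroup_inducedCx_inf_chainsOn (K : Set (Finset V)) (S T : Set V) (q : ℕ) :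
    cycleGroup (inducedCx K S) q ⊓ chainsOn T = cycleGroup (inducedCx K (S ∩ T)) q := by
  rw [cycleGroup, cycleGroup, inf_right_comm, chainGroup_inducedCx_inf_chainsOn]

theorem finiteDimensional_chainGroup_inducedCx (K : Set (Finset V)) {S : Set V}
    (hS : S.Finite) (q : ℕ) : FiniteDimensional (ZMod 2) (chainGroup (inducedCx K S) q) :=
  have := finiteDimensional_chainsOn hS
  finiteDimensional_of_le (chainGroup_inducedCx_le_chainsOn K subset_rfl q)

theorem finiteDimensional_cycleGroup_inducedCx (K : Set (Finset V)) {S : Set V}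
    (hS : S.Finite) (q : ℕ) : FiniteDimensional (ZMod 2) (cycleGroup (inducedCx K S) q) :=
  have := finiteDimensional_chainGroup_inducedCx K hS q
  finiteDimensional_of_le inf_le_left

theorem finiteDimensional_boundaryGroup_inducedCx (K : Set (Finset V)) {S : Set V}
    (hS : S.Finite) (q : ℕ) : FiniteDimensional (ZMod 2) (boundaryGroup (inducedCx K S) q) :=
  have := finiteDimensional_chainGroup_inducedCx K hS (q + 1)
  Module.Finite.map _ _

end Chains

section Geometry

variable {V : Type*} [PseudoMetricSpace V] {P Q : Set V} {z : V} {L : ℝ}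

theorem monotone_inducedCx_inter_closedBall (K : Set (Finset V)) (S : Set V) (z : V) :
    Monotone fun a => inducedCx K (S ∩ closedBall z a) := fun _ _ h =>
  inducedCx_mono K (Set.inter_subset_inter_right S (closedBall_subset_closedBall h))

theorem finite_union_inter_closedBall (hP : ∀ a, (P ∩ closedBall z a).Finite) (hQ : Q.Finite)
    (a : ℝ) : ((P ∪ Q) ∩ closedBall z a).Finite := by
  rw [Set.union_inter_distrib_right]
  exact (hP a).union (hQ.inter_of_left _)

theorem inducedCx_union_inter_closedBall_subset {K : Set (Finset V)} {D : ℝ}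
    (hK : ∀ σ ∈ K, ∀ x ∈ σ, ∀ y ∈ σ, dist x y ≤ D) (hQL : Q ⊆ closedBall z L) (a : ℝ) :
    inducedCx K ((P ∪ Q) ∩ closedBall z a) ⊆
      inducedCx K (P ∩ closedBall z a) ∪ inducedCx K ((P ∪ Q) ∩ closedBall z (L + D)) := by
  rintro σ ⟨hσK, hσS⟩
  by_cases hσP : (σ : Set V) ⊆ P
  · exact Or.inl ⟨hσK, fun x hx => ⟨hσP hx, (hσS hx).2⟩⟩
  obtain ⟨y, hyσ, hyP⟩ := Set.not_subset.1 hσP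
  have hyL : dist y z ≤ L := mem_closedBall.1 (hQL ((hσS hyσ).1.resolve_left hyP))
  refine Or.inr ⟨hσK, fun x hx => ⟨(hσS hx).1, mem_closedBall.2 ?_⟩⟩
  calc dist x z ≤ dist x y + dist y z := dist_triangle x y z
    _ ≤ D + L := add_le_add (hK σ hσK x hx y hyσ) hyL
    _ = L + D := add_comm D L

theorem chainGroup_inducedCx_union_inter_closedBall_le {K : Set (Finset V)} {D : ℝ}
    (hK : ∀ σ ∈ K, ∀ x ∈ σ, ∀ y ∈ σ, dist x y ≤ D) (hQL : Q ⊆ closedBall z L) (a : ℝ)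
    (q : ℕ) :
    chainGroup (inducedCx K ((P ∪ Q) ∩ closedBall z a)) q ≤
      chainGroup (inducedCx K (P ∩ closedBall z a)) q ⊔
        chainGroup (inducedCx K ((P ∪ Q) ∩ closedBall z (L + D))) q := by
  rw [← chainGroup_union]
  exact chainGroup_mono (inducedCx_union_inter_closedBall_subset hK hQL a) q

theorem boundaryGroup_inducedCx_union_inter_closedBall {K : Set (Finset V)} {D : ℝ}
    (hK : ∀ σ ∈ K, ∀ x ∈ σ, ∀ y ∈ σ, dist x y ≤ D) (hQL : Q ⊆ closedBall z L) {a : ℝ}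
    (ha : L + D ≤ a) (q : ℕ) :
    boundaryGroup (inducedCx K ((P ∪ Q) ∩ closedBall z a)) q =
      boundaryGroup (inducedCx K ((P ∪ Q) ∩ closedBall z (L + D))) q ⊔
        boundaryGroup (inducedCx K (P ∩ closedBall z a)) q := by
  have hPQ : P ∩ closedBall z a ⊆ (P ∪ Q) ∩ closedBall z a :=
    Set.inter_subset_inter_left _ Set.subset_union_left
  refine le_antisymm ?_ (sup_le
    (boundaryGroup_mono (monotone_inducedCx_inter_closedBall K _ z ha) q)
    (boundaryGroup_mono (inducedCx_mono K hPQ) q))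
  rw [sup_comm, boundaryGroup, boundaryGroup, boundaryGroup, ← Submodule.map_sup]
  exact map_mono (chainGroup_inducedCx_union_inter_closedBall_le hK hQL a (q + 1))

theorem exists_eventually_cycleGroup_eq_sup {K : Set (Finset V)} {D : ℝ}
    (hK : ∀ σ ∈ K, ∀ x ∈ σ, ∀ y ∈ σ, dist x y ≤ D) (hP : ∀ a, (P ∩ closedBall z a).Finite)
    (hQ : Q.Finite) (hQL : Q ⊆ closedBall z L) (q : ℕ) :
    ∃ G : Submodule (ZMod 2) (Chain V), FiniteDimensional (ZMod 2) G ∧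
      ∀ᶠ a in atTop, cycleGroup (inducedCx K ((P ∪ Q) ∩ closedBall z a)) q =
        G ⊔ cycleGroup (inducedCx K (P ∩ closedBall z a)) q := by
  have hPQ := finite_union_inter_closedBall hP hQ
  have := finiteDimensional_chainGroup_inducedCx K (hPQ (L + D)) q
  have hYF : ∀ a, cycleGroup (inducedCx K ((P ∪ Q) ∩ closedBall z a)) q ≤
      chainsOn P ⊔ chainGroup (inducedCx K ((P ∪ Q) ∩ closedBall z (L + D))) q := fun a =>
    inf_le_left.trans ((chainGroup_inducedCx_union_inter_closedBall_le hK hQL a q).trans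
      (sup_le_sup_right (chainGroup_inducedCx_le_chainsOn K Set.inter_subset_left q) _))
  obtain ⟨a₀, ha₀⟩ := exists_eventually_eq_sup_inf
    (fun _ _ h => cycleGroup_mono (monotone_inducedCx_inter_closedBall K (P ∪ Q) z h) q) hYF
  refine ⟨_, finiteDimensional_cycleGroup_inducedCx K (hPQ a₀) q, ha₀.mono fun a ha => ?_⟩
  rw [ha, cycleGroup_inducedCx_inf_chainsOn, Set.inter_right_comm, Set.union_inter_cancel_left]

theorem eventuallyConst_finrank_cycleGroup_sub {K : Set (Finset V)} {D : ℝ}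
    (hK : ∀ σ ∈ K, ∀ x ∈ σ, ∀ y ∈ σ, dist x y ≤ D) (hP : ∀ a, (P ∩ closedBall z a).Finite)
    (hQ : Q.Finite) (hQL : Q ⊆ closedBall z L) (q : ℕ) :
    EventuallyConst (fun a =>
      (finrank (ZMod 2) ↥(cycleGroup (inducedCx K ((P ∪ Q) ∩ closedBall z a)) q) : ℤ) -
        finrank (ZMod 2) ↥(cycleGroup (inducedCx K (P ∩ closedBall z a)) q)) atTop := by
  obtain ⟨G, hG, hZ'⟩ := exists_eventually_cycleGroup_eq_sup hK hP hQ hQL q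
  have := fun a => finiteDimensional_cycleGroup_inducedCx K (hP a) q
  refine (eventuallyConst_finrank_sup_sub_finrank G
    (fun _ _ h => cycleGroup_mono (monotone_inducedCx_inter_closedBall K P z h) q)).congr ?_
  filter_upwards [hZ'] with a ha
  rw [ha]

theorem eventuallyConst_finrank_cycleGroup_inf_boundaryGroup_sub {Kr Ks : Set (Finset V)}
    {Dr Ds : ℝ} (hKr : ∀ σ ∈ Kr, ∀ x ∈ σ, ∀ y ∈ σ, dist x y ≤ Dr)
    (hKs : ∀ σ ∈ Ks, ∀ x ∈ σ, ∀ y ∈ σ, dist x y ≤ Ds) (hP : ∀ a, (P ∩ closedBall z a).Finite)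
    (hQ : Q.Finite) (hQL : Q ⊆ closedBall z L) (q : ℕ) :
    EventuallyConst (fun a =>
      (finrank (ZMod 2) ↥(cycleGroup (inducedCx Kr ((P ∪ Q) ∩ closedBall z a)) q ⊓
          boundaryGroup (inducedCx Ks ((P ∪ Q) ∩ closedBall z a)) q) : ℤ) -
        finrank (ZMod 2) ↥(cycleGroup (inducedCx Kr (P ∩ closedBall z a)) q ⊓
          boundaryGroup (inducedCx Ks (P ∩ closedBall z a)) q)) atTop := by
  obtain ⟨G, hG, hZ'⟩ := exists_eventually_cycleGroup_eq_sup hKr hP hQ hQL q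
  have := fun a => finiteDimensional_cycleGroup_inducedCx Kr (hP a) q
  have := fun a => finiteDimensional_boundaryGroup_inducedCx Ks (hP a) q
  have := finiteDimensional_boundaryGroup_inducedCx Ks
    (finite_union_inter_closedBall hP hQ (L + Ds)) q
  exact eventuallyConst_finrank_inf_sub_finrank_inf
    (fun _ _ h => cycleGroup_mono (monotone_inducedCx_inter_closedBall Kr P z h) q)
    (fun _ _ h => boundaryGroup_mono (monotone_inducedCx_inter_closedBall Ks P z h) q) hZ'
    (eventually_atTop.2 ⟨L + Ds, fun _ ha =>
      boundaryGroup_inducedCx_union_inter_closedBall hKs hQL ha q⟩)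

theorem finite_inter_closedBall_of_forall_not_accPt [ProperSpace V]
    (hP : ∀ x : V, ¬AccPt x (𝓟 P)) (z : V) (a : ℝ) : (P ∩ closedBall z a).Finite := by
  by_contra hinf
  obtain ⟨x, -, hx⟩ := Set.Infinite.exists_accPt_of_subset_isCompact hinf
    (isCompact_closedBall z a) Set.inter_subset_right
  exact hP x (hx.mono (principal_mono.2 Set.inter_subset_left))

end Geometry

section CechRips

variable {d : ℕ}

theorem cechCx_eq_inducedCx (u : ℝ) : cechCx d u = inducedCx (cechCx d u Set.univ) := by
  ext S σ
  simp only [cechCx, inducedCx, Set.mem_ofPred_eq, Set.subset_univ, true_and]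
  tauto

theorem ripsCx_eq_inducedCx (u : ℝ) : ripsCx d u = inducedCx (ripsCx d u Set.univ) := by
  ext S σ
  simp only [ripsCx, inducedCx, Set.mem_ofPred_eq, Set.subset_univ, true_and]
  tauto

theorem dist_le_of_mem_cechCx {u : ℝ} {S : Set (Pt d)} {σ : Finset (Pt d)}
    (hσ : σ ∈ cechCx d u S) {x y : Pt d} (hx : x ∈ σ) (hy : y ∈ σ) : dist x y ≤ 2 * u := by
  obtain ⟨-, -, w, hw⟩ := hσ
  have hxw := mem_closedBall'.1 (Set.mem_iInter₂.1 hw x (Finset.mem_coe.2 hx))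
  have hyw := mem_closedBall.1 (Set.mem_iInter₂.1 hw y (Finset.mem_coe.2 hy))
  linarith [dist_triangle x w y]

theorem dist_le_of_mem_ripsCx {u : ℝ} {S : Set (Pt d)} {σ : Finset (Pt d)}
    (hσ : σ ∈ ripsCx d u S) {x y : Pt d} (hx : x ∈ σ) (hy : y ∈ σ) : dist x y ≤ u :=
  (dist_le_diam_of_mem σ.finite_toSet.isBounded hx hy).trans hσ.2.2

theorem exists_dist_le_and_eq_inducedCx {Kx : ℝ → Set (Pt d) → Set (Finset (Pt d))}
    (hKx : Kx = cechCx d ∨ Kx = ripsCx d) (u : ℝ) :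
    ∃ (K : Set (Finset (Pt d))) (D : ℝ), (∀ σ ∈ K, ∀ x ∈ σ, ∀ y ∈ σ, dist x y ≤ D) ∧
      Kx u = inducedCx K := by
  rcases hKx with rfl | rfl
  · exact ⟨_, 2 * u, fun σ hσ x hx y hy => dist_le_of_mem_cechCx hσ hx hy,
      cechCx_eq_inducedCx u⟩
  · exact ⟨_, u, fun σ hσ x hx y hy => dist_le_of_mem_ripsCx hσ hx hy,
      ripsCx_eq_inducedCx u⟩

end CechRips

theorem exists_weak_stabilization_radius_general {d : ℕ}
    (Kx : ℝ → Set (Pt d) → Set (Finset (Pt d))) (hKx : Kx = cechCx d ∨ Kx = ripsCx d)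
    (P Q : Set (Pt d)) (hP : ∀ x : Pt d, ¬ AccPt x (Filter.principal P))
    (hQfin : Q.Finite) (z : Pt d) (L : ℝ) (hQL : Q ⊆ Metric.closedBall z L)
    (r s : ℝ) :
    ∃ R : ℝ, ∀ q : ℕ, q < d → ∀ a₁ a₂ : ℝ, R ≤ a₁ → R ≤ a₂ →
      ((Module.finrank (ZMod 2)
            ↥(cycleGroup (Kx r ((P ∪ Q) ∩ Metric.closedBall z a₁)) q) : ℤ) -
          (Module.finrank (ZMod 2)
            ↥(cycleGroup (Kx r (P ∩ Metric.closedBall z a₁)) q) : ℤ) =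
        (Module.finrank (ZMod 2)
            ↥(cycleGroup (Kx r ((P ∪ Q) ∩ Metric.closedBall z a₂)) q) : ℤ) -
          (Module.finrank (ZMod 2)
            ↥(cycleGroup (Kx r (P ∩ Metric.closedBall z a₂)) q) : ℤ)) ∧
      ((Module.finrank (ZMod 2)
            ↥(cycleGroup (Kx r ((P ∪ Q) ∩ Metric.closedBall z a₁)) q ⊓
              boundaryGroup (Kx s ((P ∪ Q) ∩ Metric.closedBall z a₁)) q) : ℤ) -
          (Module.finrank (ZMod 2)
            ↥(cycleGroup (Kx r (P ∩ Metric.closedBall z a₁)) q ⊓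
              boundaryGroup (Kx s (P ∩ Metric.closedBall z a₁)) q) : ℤ) =
        (Module.finrank (ZMod 2)
            ↥(cycleGroup (Kx r ((P ∪ Q) ∩ Metric.closedBall z a₂)) q ⊓
              boundaryGroup (Kx s ((P ∪ Q) ∩ Metric.closedBall z a₂)) q) : ℤ) -
          (Module.finrank (ZMod 2)
            ↥(cycleGroup (Kx r (P ∩ Metric.closedBall z a₂)) q ⊓
              boundaryGroup (Kx s (P ∩ Metric.closedBall z a₂)) q) : ℤ)) := by
  obtain ⟨Kr, Dr, hDr, hKr⟩ := exists_dist_le_and_eq_inducedCx hKx r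
  obtain ⟨Ks, Ds, hDs, hKs⟩ := exists_dist_le_and_eq_inducedCx hKx s
  have hPfin := finite_inter_closedBall_of_forall_not_accPt hP z
  rw [hKr, hKs]
  obtain ⟨R, hR⟩ := exists_forall_eq_of_eventuallyConst_atTop (fun q =>
    (eventuallyConst_finrank_cycleGroup_sub hDr hPfin hQfin hQL q).prodMk
      (eventuallyConst_finrank_cycleGroup_inf_boundaryGroup_sub hDr hDs hPfin hQfin hQL q))
    (Set.finite_lt_nat d)
  exact ⟨R, fun q hq a₁ a₂ h₁ h₂ => Prod.ext_iff.1 (hR q hq a₁ a₂ h₁ h₂)⟩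

/-- Existence of the radius of weak stabilization: let `P ⊆ ℝ^d` have
no accumulation points and `Q` be a finite set contained in `B(z,L)`.  For each pair
`0 ≤ r ≤ s < ∞` there exists a finite `R` such that for all `a ≥ R` and all
`0 ≤ q ≤ d − 1`, both `dim Z_q(K'_{r,a}) − dim Z_q(K_{r,a})` and
`dim (Z_q(K'_{r,a}) ∩ B_q(K'_{s,a})) − dim (Z_q(K_{r,a}) ∩ B_q(K_{s,a}))` are constant
in `a`, where `K_{u,a} = K_u(P ∩ B(z,a))` and `K'_{u,a} = K_u((P ∪ Q) ∩ B(z,a))` for the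
Čech or Rips filtration. -/
theorem exists_weak_stabilization_radius {d : ℕ}
    (Kx : ℝ → Set (Pt d) → Set (Finset (Pt d))) (hKx : Kx = cechCx d ∨ Kx = ripsCx d)
    (P Q : Set (Pt d)) (hP : ∀ x : Pt d, ¬ AccPt x (Filter.principal P))
    (hQfin : Q.Finite) (z : Pt d) (L : ℝ) (hQL : Q ⊆ Metric.closedBall z L)
    (r s : ℝ) (hr : 0 ≤ r) (hrs : r ≤ s) :
    ∃ R : ℝ, ∀ q : ℕ, q < d → ∀ a₁ a₂ : ℝ, R ≤ a₁ → R ≤ a₂ →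
      ((Module.finrank (ZMod 2)
            ↥(cycleGroup (Kx r ((P ∪ Q) ∩ Metric.closedBall z a₁)) q) : ℤ) -
          (Module.finrank (ZMod 2)
            ↥(cycleGroup (Kx r (P ∩ Metric.closedBall z a₁)) q) : ℤ) =
        (Module.finrank (ZMod 2)
            ↥(cycleGroup (Kx r ((P ∪ Q) ∩ Metric.closedBall z a₂)) q) : ℤ) -
          (Module.finrank (ZMod 2)
            ↥(cycleGroup (Kx r (P ∩ Metric.closedBall z a₂)) q) : ℤ)) ∧
      ((Module.finrank (ZMod 2)
            ↥(cycleGroup (Kx r ((P ∪ Q) ∩ Metric.closedBall z a₁)) q ⊓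
              boundaryGroup (Kx s ((P ∪ Q) ∩ Metric.closedBall z a₁)) q) : ℤ) -
          (Module.finrank (ZMod 2)
            ↥(cycleGroup (Kx r (P ∩ Metric.closedBall z a₁)) q ⊓
              boundaryGroup (Kx s (P ∩ Metric.closedBall z a₁)) q) : ℤ) =
        (Module.finrank (ZMod 2)
            ↥(cycleGroup (Kx r ((P ∪ Q) ∩ Metric.closedBall z a₂)) q ⊓
              boundaryGroup (Kx s ((P ∪ Q) ∩ Metric.closedBall z a₂)) q) : ℤ) -
          (Module.finrank (ZMod 2)
            ↥(cycleGroup (Kx r (P ∩ Metric.closedBall z a₂)) q ⊓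
              boundaryGroup (Kx s (P ∩ Metric.closedBall z a₂)) q) : ℤ)) :=
  exists_weak_stabilization_radius_general Kx hKx P Q hP hQfin z L hQL r s
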